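/- arXiv:2409.15120 — 3 statements merged into one kernel-verified Lean document; each statement's English description precedes it below -/
import Mathlib

section
/- In the reals with the signum function, the conditional rule sign(u) = sign(v) → sign(u + v) = sign(u) holds; equivalently, the equation (1 - (sign(u) - sign(v))·(sign(u) - sign(v))⁻¹)·(sign(u+v) - sign(u)) = 0 holds for all real u, v, where ⁻¹ is the zero-totalized inverse. -/
noncomputable def sign' (x : ℝ) : ℝ := if 0 < x then 1 else if x = 0 then 0 else -1

lemma sign'_pos {x : ℝ} (h : 0 < x) : sign' x = 1 := if_pos h

lemma sign'_zero : sign' (0:ℝ) = 0 := by simp [sign']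

lemma sign'_neg {x : ℝ} (h : x < 0) : sign' x = -1 := by
  unfold sign'; rw [if_neg (by linarith), if_neg (by linarith)]

lemma sign'_eq_one {x : ℝ} (h : sign' x = 1) : 0 < x := by
  rcases lt_trichotomy 0 x with hx | hx | hx
  · exact hx
  · rw [← hx, sign'_zero] at h; norm_num at h
  · rw [sign'_neg hx] at h; norm_num at h

lemma sign'_eq_zero {x : ℝ} (h : sign' x = 0) : x = 0 := by
  rcases lt_trichotomy 0 x with hx | hx | hx
  · rw [sign'_pos hx] at h; norm_num at h
  · exact hx.symm
  · rw [sign'_neg hx] at h; norm_num at h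

lemma sign'_eq_negone {x : ℝ} (h : sign' x = -1) : x < 0 := by
  rcases lt_trichotomy 0 x with hx | hx | hx
  · rw [sign'_pos hx] at h; norm_num at h
  · rw [← hx, sign'_zero] at h; norm_num at h
  · exact hx

lemma sign'_main : ∀ u v : ℝ, sign' u = sign' v → sign' (u + v) = sign' u := by
  intro u v h
  rcases lt_trichotomy 0 u with hu | hu | hu
  · rw [sign'_pos hu] at h ⊢
    exact sign'_pos (by linarith [sign'_eq_one h.symm])
  · rw [← hu] at h ⊢
    rw [sign'_zero] at h ⊢
    rw [(sign'_eq_zero h.symm), add_zero, sign'_zero]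
  · rw [sign'_neg hu] at h ⊢
    exact sign'_neg (by linarith [sign'_eq_negone h.symm])

theorem sign_add_rule :
    (∀ u v : ℝ, sign' u = sign' v → sign' (u + v) = sign' u) ∧
    (∀ u v : ℝ,
      (1 - (sign' u - sign' v) * (sign' u - sign' v)⁻¹) * (sign' (u + v) - sign' u) = 0) := by
  constructor
  · exact sign'_main
  · intro u v
    by_cases h : sign' u = sign' v
    · rw [sign'_main u v h]; ring
    · rw [mul_inv_cancel₀ (sub_ne_zero.mpr h)]; ring
end

section
/- The signed-meadow expression for the minimum is correct: for all real u, v, (sign(sign(u-v)-1)·(sign(sign(u-v)-1))⁻¹)·(u - v) + v = min(u, v), where ⁻¹ is the zero-totalized inverse. -/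
theorem min_meadow (u v : ℝ) :
    sign' (sign' (u - v) - 1) * (sign' (sign' (u - v) - 1))⁻¹ * (u - v) + v = min u v := by
  rcases lt_trichotomy u v with h | h | h
  · have h1 : u - v < 0 := by linarith
    simp only [sign', if_neg (by linarith : ¬ 0 < u - v), if_neg (by linarith : u - v ≠ 0)]
    norm_num
    linarith
  · subst h
    simp [sign', min_self]
  · have h1 : 0 < u - v := by linarith
    simp only [sign', if_pos h1]
    norm_num
    linarith
end

section
/- The signed-meadow expression for the maximum is correct: for all real u, v, (sign(sign(u-v)+1)·(sign(sign(u-v)+1))⁻¹)·(u - v) + v = max(u, v), where ⁻¹ is the zero-totalized inverse. -/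
theorem max_meadow (u v : ℝ) :
    sign' (sign' (u - v) + 1) * (sign' (sign' (u - v) + 1))⁻¹ * (u - v) + v = max u v := by
  unfold sign'
  rcases lt_trichotomy u v with h | h | h
  · simp [sub_pos, sub_eq_zero, not_lt.mpr h.le, h.ne, max_eq_right h.le]
  · simp [h]
  · simp [sub_pos.mpr h, max_eq_left h.le]
end
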